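/- arXiv:0901.0435 — 2 statements merged into one kernel-verified Lean document; each statement's English description precedes it below -/
import Mathlib

section
/- Let n be a positive integer and let b, d be real numbers with b < 1 - n and d < b + 1 - n, and assume d is not a nonpositive integer. Then for every real polynomial g of degree at most n - 1, ∫₁^∞ z^{d-1} (1-z)^{b-d-n} ₂F₁(-n, b; d; z) g(z) dz = 0 (the integral being absolutely convergent). -/
open MeasureTheory

/-- The Pochhammer symbol `(x)_k = x (x+1) ⋯ (x+k-1)` for a real number `x`. -/
noncomputable def poch (x : ℝ) (k : ℕ) : ℝ := ∏ i ∈ Finset.range k, (x + i)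

/-- The terminating Gauss hypergeometric polynomial `₂F₁(-n, b; d; z)`
    as a real polynomial in `z`. -/
noncomputable def hypPoly (n : ℕ) (b d : ℝ) : Polynomial ℝ :=
  ∑ k ∈ Finset.range (n + 1),
    Polynomial.C ((poch (-(n : ℝ)) k * poch b k) / (poch d k * (Nat.factorial k))) *
      Polynomial.X ^ k

/-
Write `β = b - d - n` and `I(α) = ∫₁^∞ z^α (z-1)^β dz`. Integration by parts gives
`(α+β+2) I(α+1) = (α+1) I(α)`, hence `I(α+k) = I(α) (α+1)_k / (α+β+2)_k`. Expanding
`₂F₁(-n,b;d;z)` termwise, the integral against `z^m` becomes `I(d-1+m)` times the balanced sum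
`₃F₂(-n, b, d+m; d, b+m+1-n; 1)`, which vanishes for `m < n` by Pfaff–Saalschütz since
`(-m)_n = 0`. Instead of quoting Pfaff–Saalschütz we write its `k`-th term as
`(-1)^k (n choose k) Q(k)` with `deg Q = n - 1`: the sum is an `n`-th finite difference of `Q`.
-/

open Set Filter Topology Polynomial Finset

lemma poch_eq_eval_ascPochhammer (x : ℝ) (k : ℕ) : poch x k = (ascPochhammer ℝ k).eval x := by
  induction k with
  | zero => simp [poch]
  | succ k ih => rw [poch, prod_range_succ, ← poch, ih, ascPochhammer_succ_eval]

lemma poch_succ (x : ℝ) (k : ℕ) : poch x (k + 1) = poch x k * (x + k) :=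
  prod_range_succ _ _

lemma poch_add (x : ℝ) (k l : ℕ) : poch x (k + l) = poch x k * poch (x + k) l := by
  simp only [poch_eq_eval_ascPochhammer, ← ascPochhammer_mul, eval_mul, eval_comp, eval_add,
    eval_X, eval_natCast]

lemma poch_mul_poch_add_comm (x : ℝ) (k l : ℕ) :
    poch x k * poch (x + k) l = poch x l * poch (x + l) k := by
  rw [← poch_add, ← poch_add, add_comm]

lemma poch_ne_zero {x : ℝ} {k : ℕ} (h : ∀ i < k, x + i ≠ 0) : poch x k ≠ 0 :=
  prod_ne_zero_iff.2 fun i hi => h i (mem_range.1 hi)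

lemma poch_neg_natCast (n k : ℕ) :
    poch (-(n : ℝ)) k = (-1) ^ k * Nat.factorial k * n.choose k := by
  rw [poch_eq_eval_ascPochhammer, ascPochhammer_eval_neg_eq_descPochhammer,
    descPochhammer_eval_eq_descFactorial, Nat.descFactorial_eq_factorial_mul_choose]
  push_cast
  ring

lemma natDegree_ascPochhammer_comp_X_add_C {R : Type*} [CommSemiring R] [NoZeroDivisors R]
    [Nontrivial R] (k : ℕ) (a : R) :
    ((ascPochhammer R k).comp (X + C a)).natDegree = k := by
  rw [natDegree_comp, ascPochhammer_natDegree, natDegree_X_add_C, mul_one]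

theorem Polynomial.sum_range_neg_one_pow_mul_choose_mul_eval_eq_zero {R : Type*} [CommRing R]
    {P : R[X]} {n : ℕ} (hP : P.natDegree < n) :
    ∑ k ∈ range (n + 1), (-1) ^ k * (n.choose k : R) * P.eval (k : R) = 0 := by
  have h := congr_fun (fwdDiff_iter_eq_zero_of_degree_lt hP) 0
  rw [fwdDiff_iter_eq_sum_shift] at h
  rw [← mul_eq_zero_of_right ((-1 : R) ^ n) h, mul_sum]
  refine sum_congr rfl fun k hk => ?_
  obtain ⟨j, rfl⟩ := Nat.exists_eq_add_of_le (Nat.lt_succ_iff.1 (mem_range.1 hk))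
  have hj : (-1 : R) ^ (j + j) = 1 := Even.neg_one_pow ⟨j, rfl⟩
  simp only [Nat.add_sub_cancel_left, zsmul_eq_mul, nsmul_one, zero_add]
  push_cast
  linear_combination (-(-1) ^ k * (((k + j).choose k : ℕ) : R) * P.eval (k : R)) * hj

lemma sum_range_hypPoly_coeff_mul_poch_div_poch_eq_zero {n m : ℕ} (hm : m < n) {b d : ℝ}
    (hd : ∀ j < n, d + j ≠ 0) (hb : ∀ j < n, b + m + 1 - n + j ≠ 0) :
    ∑ k ∈ range (n + 1), (poch (-(n : ℝ)) k * poch b k) / (poch d k * Nat.factorial k) *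
      (poch (d + m) k / poch (b + m + 1 - n) k) = 0 := by
  obtain ⟨r, rfl⟩ : ∃ r, n = m + r + 1 := ⟨n - m - 1, by omega⟩
  have hcast : b + m + 1 - ((m + r + 1 : ℕ) : ℝ) = b - r := by push_cast; ring
  rw [hcast] at hb ⊢
  -- `(d+m)_k / (d)_k = (d+k)_m / (d)_m` and `(b)_k / (b-r)_k = (b-r+k)_r / (b-r)_r`
  set Q : ℝ[X] := C (poch d m * poch (b - r) r)⁻¹ *
    ((ascPochhammer ℝ m).comp (X + C d) * (ascPochhammer ℝ r).comp (X + C (b - r)))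
  have hQ : Q.natDegree < m + r + 1 := by
    refine (natDegree_C_mul_le _ _).trans_lt (natDegree_mul_le.trans_lt ?_)
    simp only [natDegree_ascPochhammer_comp_X_add_C]
    omega
  rw [← Q.sum_range_neg_one_pow_mul_choose_mul_eval_eq_zero hQ]
  refine sum_congr rfl fun k hk => ?_
  have hk : k < m + r + 2 := mem_range.1 hk
  have hdk : poch d k ≠ 0 := poch_ne_zero fun i hi => hd i (by omega)
  have hdm : poch d m ≠ 0 := poch_ne_zero fun i hi => hd i (by omega)
  have hbk : poch (b - r) k ≠ 0 := poch_ne_zero fun i hi => hb i (by omega)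
  have hbr : poch (b - r) r ≠ 0 := poch_ne_zero fun i hi => hb i (by omega)
  have hdshift := poch_mul_poch_add_comm d k m
  have hbshift := poch_mul_poch_add_comm (b - r) k r
  rw [sub_add_cancel] at hbshift
  simp only [Q, eval_mul, eval_C, eval_comp, eval_add, eval_X, ← poch_eq_eval_ascPochhammer,
    poch_neg_natCast]
  rw [add_comm (k : ℝ) d, add_comm (k : ℝ) (b - r)]
  field_simp
  linear_combination
    (-((m + r + 1).choose k : ℝ) * poch (b - r) k * poch (b - r + k) r) * hdshift -
      ((m + r + 1).choose k * poch d m * poch (d + m) k) * hbshift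

lemma rpow_mul_sub_one_rpow_eq {z : ℝ} (hz : 1 ≤ z) (α β : ℝ) :
    z ^ α * (z - 1) ^ β = z ^ (α + β) * (1 - z⁻¹) ^ β := by
  have hz0 : 0 < z := by linarith
  have hinv : 0 ≤ 1 - z⁻¹ := sub_nonneg.2 (inv_le_one_of_one_le₀ hz)
  rw [Real.rpow_add hz0, mul_assoc, ← Real.mul_rpow hz0.le hinv, mul_one_sub,
    mul_inv_cancel₀ hz0.ne']

lemma tendsto_one_sub_inv_rpow_atTop (β : ℝ) :
    Tendsto (fun z : ℝ => (1 - z⁻¹) ^ β) atTop (𝓝 1) := by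
  have h : Tendsto (fun z : ℝ => 1 - z⁻¹) atTop (𝓝 1) := by
    simpa using tendsto_inv_atTop_zero.const_sub (1 : ℝ)
  simpa using h.rpow_const (Or.inl one_ne_zero)

lemma integrableOn_Ioc_rpow_mul_sub_one_rpow {β : ℝ} (hβ : -1 < β) (α : ℝ) :
    IntegrableOn (fun z : ℝ => z ^ α * (z - 1) ^ β) (Ioc 1 2) := by
  have hsing : IntegrableOn (fun z : ℝ => (z - 1) ^ β) (Ioc 1 2) := by
    have h := (intervalIntegral.intervalIntegrable_rpow' (a := 0) (b := 1) hβ).comp_sub_right 1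
    rw [intervalIntegrable_iff_integrableOn_Ioc_of_le (by norm_num)] at h
    norm_num at h
    exact h
  have hcont : ContinuousOn (fun z : ℝ => z ^ α) (Icc 1 2) := fun z hz =>
    (Real.continuousAt_rpow_const z α (Or.inl (by linarith [hz.1]))).continuousWithinAt
  simpa only [mul_comm] using
    hsing.mul_continuousOn_of_subset hcont measurableSet_Ioc isCompact_Icc Ioc_subset_Icc_self

lemma integrableOn_Ioi_two_rpow_mul_sub_one_rpow {α β : ℝ} (h : α + β < -1) :
    IntegrableOn (fun z : ℝ => z ^ α * (z - 1) ^ β) (Ioi 2) := by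
  have hcont : ContinuousOn (fun z : ℝ => z ^ α * (z - 1) ^ β) (Ici 2) := by
    intro z (hz : 2 ≤ z)
    have hz0 : z ≠ 0 := by positivity
    have hz1 : z - 1 ≠ 0 := by linarith
    exact ((continuousAt_id.rpow_const (Or.inl hz0)).mul
      ((continuousAt_id.sub continuousAt_const).rpow_const (Or.inl hz1))).continuousWithinAt
  have hO : (fun z : ℝ => z ^ α * (z - 1) ^ β) =O[atTop] fun z => z ^ (α + β) := by
    have h := (Asymptotics.isBigO_refl (fun z : ℝ => z ^ (α + β)) atTop).mul
      ((tendsto_one_sub_inv_rpow_atTop β).isBigO_one ℝ)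
    simp only [mul_one] at h
    refine h.congr' ?_ EventuallyEq.rfl
    filter_upwards [eventually_ge_atTop 1] with z hz using (rpow_mul_sub_one_rpow_eq hz α β).symm
  have hint : IntegrableAtFilter (fun z : ℝ => z ^ (α + β)) atTop :=
    ⟨Ioi 2, Ioi_mem_atTop 2, integrableOn_Ioi_rpow_of_lt h two_pos⟩
  exact ((hcont.locallyIntegrableOn measurableSet_Ici).integrableOn_of_isBigO_atTop hO
    hint).mono_set Ioi_subset_Ici_self

lemma integrableOn_Ioi_one_rpow_mul_sub_one_rpow {α β : ℝ} (hβ : -1 < β) (h : α + β < -1) :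
    IntegrableOn (fun z : ℝ => z ^ α * (z - 1) ^ β) (Ioi 1) := by
  rw [← Ioc_union_Ioi_eq_Ioi one_le_two]
  exact (integrableOn_Ioc_rpow_mul_sub_one_rpow hβ α).union
    (integrableOn_Ioi_two_rpow_mul_sub_one_rpow h)

lemma integral_rpow_add_one_mul_sub_one_rpow {α β : ℝ} (hβ : -1 < β) (h : α + β + 2 < 0) :
    (α + β + 2) * ∫ z in Ioi 1, z ^ (α + 1) * (z - 1) ^ β =
      (α + 1) * ∫ z in Ioi 1, z ^ α * (z - 1) ^ β := by
  set F : ℝ → ℝ := fun z => z ^ (α + 1) * (z - 1) ^ (β + 1)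
  have hint₁ := integrableOn_Ioi_one_rpow_mul_sub_one_rpow (α := α + 1) hβ (by linarith)
  have hint₀ := integrableOn_Ioi_one_rpow_mul_sub_one_rpow (α := α) hβ (by linarith)
  have hderiv : ∀ z ∈ Ioi (1 : ℝ), HasDerivAt F
      ((α + β + 2) * (z ^ (α + 1) * (z - 1) ^ β) - (α + 1) * (z ^ α * (z - 1) ^ β)) z := by
    intro z (hz : 1 < z)
    have hz0 : z ≠ 0 := by positivity
    have hz1 : z - 1 ≠ 0 := by linarith
    refine (((hasDerivAt_id z).rpow_const (p := α + 1) (Or.inl hz0)).mul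
      (((hasDerivAt_id z).sub_const 1).rpow_const (p := β + 1) (Or.inl hz1))).congr_deriv ?_
    simp only [id, add_sub_cancel_right, Real.rpow_add_one hz0, Real.rpow_add_one hz1]
    ring
  have hcont : ContinuousWithinAt F (Ici 1) 1 :=
    ((continuousAt_id.rpow_const (Or.inl one_ne_zero)).mul
      ((continuousAt_id.sub continuousAt_const).rpow_const
        (Or.inr (by linarith)))).continuousWithinAt
  have htend : Tendsto F atTop (𝓝 0) := by
    have h := (tendsto_rpow_neg_atTop (y := -(α + β + 2)) (by linarith)).mul
      (tendsto_one_sub_inv_rpow_atTop (β + 1))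
    rw [neg_neg, zero_mul] at h
    refine h.congr' ?_
    filter_upwards [eventually_ge_atTop 1] with z hz
    rw [show F z = _ from rpow_mul_sub_one_rpow_eq hz _ _, add_add_add_comm, one_add_one_eq_two]
  have hFTC := integral_Ioi_of_hasDerivAt_of_tendsto hcont hderiv
    ((hint₁.const_mul _).sub (hint₀.const_mul _)) htend
  rw [integral_sub (hint₁.const_mul _) (hint₀.const_mul _), integral_const_mul,
    integral_const_mul] at hFTC
  have hF1 : F 1 = 0 := by simp [F, Real.zero_rpow (by linarith : β + 1 ≠ 0)]
  linarith

lemma poch_mul_integral_rpow_add_natCast_mul_sub_one_rpow {α β : ℝ} (hβ : -1 < β) {k : ℕ}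
    (h : α + β + k < -1) :
    poch (α + β + 2) k * ∫ z in Ioi 1, z ^ (α + k) * (z - 1) ^ β =
      poch (α + 1) k * ∫ z in Ioi 1, z ^ α * (z - 1) ^ β := by
  induction k with
  | zero => simp [poch]
  | succ k ih =>
    have hstep :=
      integral_rpow_add_one_mul_sub_one_rpow (α := α + k) hβ (by push_cast at h; linarith)
    rw [poch_succ, poch_succ, Nat.cast_succ, ← add_assoc]
    linear_combination poch (α + β + 2) k * hstep +
      (α + k + 1) * ih (by push_cast at h; linarith)

lemma integral_rpow_mul_sub_one_rpow_mul_sum_pow {α β : ℝ} (hβ : -1 < β) (a : ℕ → ℝ)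
    {N : ℕ} (h : α + β + N < 0) :
    IntegrableOn (fun z : ℝ => z ^ α * (z - 1) ^ β * ∑ k ∈ range N, a k * z ^ k) (Ioi 1) ∧
      ∫ z in Ioi 1, z ^ α * (z - 1) ^ β * ∑ k ∈ range N, a k * z ^ k =
        (∫ z in Ioi 1, z ^ α * (z - 1) ^ β) *
          ∑ k ∈ range N, a k * (poch (α + 1) k / poch (α + β + 2) k) := by
  have hk : ∀ k ∈ range N, α + β + k < -1 := fun k hk => by
    have : (k : ℝ) + 1 ≤ N := by exact_mod_cast mem_range.1 hk
    linarith
  have hterm : ∀ k ∈ range N,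
      IntegrableOn (fun z : ℝ => a k * (z ^ (α + k) * (z - 1) ^ β)) (Ioi 1) := fun k hk' =>
    (integrableOn_Ioi_one_rpow_mul_sub_one_rpow hβ (by linarith [hk k hk'])).const_mul _
  have heq : EqOn (fun z : ℝ => z ^ α * (z - 1) ^ β * ∑ k ∈ range N, a k * z ^ k)
      (fun z => ∑ k ∈ range N, a k * (z ^ (α + k) * (z - 1) ^ β)) (Ioi 1) := by
    intro z (hz : 1 < z)
    simp only [mul_sum, Real.rpow_add (by linarith : 0 < z), Real.rpow_natCast]
    exact sum_congr rfl fun k _ => by ring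
  refine ⟨IntegrableOn.congr_fun (integrable_finsetSum _ hterm) heq.symm measurableSet_Ioi, ?_⟩
  rw [setIntegral_congr_fun measurableSet_Ioi heq, integral_finsetSum _ hterm, mul_sum]
  refine sum_congr rfl fun k hk' => ?_
  have hpoch : poch (α + β + 2) k ≠ 0 := poch_ne_zero fun i hi => by
    have : (i : ℝ) + 1 ≤ k := by exact_mod_cast hi
    linarith [hk k hk']
  rw [integral_const_mul]
  field_simp
  linear_combination a k * poch_mul_integral_rpow_add_natCast_mul_sub_one_rpow hβ (hk k hk')

lemma eval_hypPoly (n : ℕ) (b d z : ℝ) :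
    (hypPoly n b d).eval z = ∑ k ∈ range (n + 1),
      (poch (-(n : ℝ)) k * poch b k) / (poch d k * Nat.factorial k) * z ^ k := by
  simp [hypPoly, eval_finsetSum]

lemma integral_rpow_mul_sub_one_rpow_mul_hypPoly_eq_zero {n m : ℕ} (hm : m < n) {b d : ℝ}
    (hb : b < 1 - n) (hd : d < b + 1 - n) (hdz : ∀ k : ℕ, d ≠ -(k : ℝ)) :
    IntegrableOn (fun z : ℝ => z ^ (d - 1 + m) * (z - 1) ^ (b - d - n) * (hypPoly n b d).eval z)
        (Ioi 1) ∧
      ∫ z in Ioi 1, z ^ (d - 1 + m) * (z - 1) ^ (b - d - n) * (hypPoly n b d).eval z = 0 := by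
  have hm' : (m : ℝ) + 1 ≤ n := by exact_mod_cast hm
  simp only [eval_hypPoly]
  obtain ⟨hint, heq⟩ := integral_rpow_mul_sub_one_rpow_mul_sum_pow (α := d - 1 + m)
    (β := b - d - n) (by linarith) (fun k => (poch (-(n : ℝ)) k * poch b k) /
      (poch d k * Nat.factorial k)) (N := n + 1) (by push_cast; linarith)
  refine ⟨hint, ?_⟩
  rw [heq, show d - 1 + m + 1 = d + m by ring,
    show d - 1 + m + (b - d - n) + 2 = b + m + 1 - n by ring,
    sum_range_hypPoly_coeff_mul_poch_div_poch_eq_zero hm (fun j _ h => hdz j (by linarith))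
      (fun j hj => by
        have : (j : ℝ) + 1 ≤ n := by exact_mod_cast hj
        linarith), mul_zero]

theorem hyp_orthogonality_Ioi_one_general (n : ℕ) (b d : ℝ)
    (hb : b < 1 - n) (hd : d < b + 1 - n) (hdz : ∀ k : ℕ, d ≠ -(k : ℝ))
    (g : Polynomial ℝ) (hg : g.natDegree < n) :
    IntegrableOn
      (fun z : ℝ => Real.rpow z (d - 1) * Real.rpow (z - 1) (b - d - n) *
        (hypPoly n b d).eval z * g.eval z) (Set.Ioi 1) ∧
    ∫ z in Set.Ioi (1 : ℝ),
      Real.rpow z (d - 1) * Real.rpow (z - 1) (b - d - n) *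
        (hypPoly n b d).eval z * g.eval z = 0 := by
  have hpoly : EqOn
      (fun z : ℝ => Real.rpow z (d - 1) * Real.rpow (z - 1) (b - d - n) *
        (hypPoly n b d).eval z * g.eval z)
      (fun z => ∑ m ∈ range n,
        g.coeff m * (z ^ (d - 1 + m) * (z - 1) ^ (b - d - n) * (hypPoly n b d).eval z))
      (Ioi 1) := by
    intro z (hz : 1 < z)
    simp only [Real.rpow_eq_pow, eval_eq_sum_range' hg, mul_sum,
      Real.rpow_add (by linarith : 0 < z), Real.rpow_natCast]
    exact sum_congr rfl fun m _ => by ring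
  have hterm : ∀ m ∈ range n, IntegrableOn (fun z : ℝ =>
      g.coeff m * (z ^ (d - 1 + m) * (z - 1) ^ (b - d - n) * (hypPoly n b d).eval z)) (Ioi 1) :=
    fun m hm =>
      (integral_rpow_mul_sub_one_rpow_mul_hypPoly_eq_zero (mem_range.1 hm) hb hd hdz).1.const_mul _
  refine ⟨IntegrableOn.congr_fun (integrable_finsetSum _ hterm) hpoly.symm
    measurableSet_Ioi, ?_⟩
  rw [setIntegral_congr_fun measurableSet_Ioi hpoly, integral_finsetSum _ hterm]
  refine sum_eq_zero fun m hm => ?_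
  rw [integral_const_mul, (integral_rpow_mul_sub_one_rpow_mul_hypPoly_eq_zero (mem_range.1 hm)
    hb hd hdz).2, mul_zero]

/-- For `b < 1 - n`, `d < b + 1 - n` and `d` not a nonpositive integer, the polynomial
`₂F₁(-n, b; d; z)` is orthogonal on `(1, ∞)` with respect to the weight
`z^(d-1) (1-z)^(b-d-n)` (the latter factor interpreted via the continuous branch
`(z-1)^(b-d-n)` for `z > 1`) to every real polynomial `g` of degree at most `n - 1`,
the integral being absolutely convergent. -/
theorem hyp_orthogonality_Ioi_one (n : ℕ) (hn : 0 < n) (b d : ℝ)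
    (hb : b < 1 - n) (hd : d < b + 1 - n) (hdz : ∀ k : ℕ, d ≠ -(k : ℝ))
    (g : Polynomial ℝ) (hg : g.natDegree < n) :
    IntegrableOn
      (fun z : ℝ => Real.rpow z (d - 1) * Real.rpow (z - 1) (b - d - n) *
        (hypPoly n b d).eval z * g.eval z) (Set.Ioi 1) ∧
    ∫ z in Set.Ioi (1 : ℝ),
      Real.rpow z (d - 1) * Real.rpow (z - 1) (b - d - n) *
        (hypPoly n b d).eval z * g.eval z = 0 :=
  hyp_orthogonality_Ioi_one_general n b d hb hd hdz g hg
end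

section
/- Let a, c be real numbers with c not a nonpositive integer, and let m, n be positive integers with m ≥ n - 1. If c > a > n - m - 1, then all n zeros of the polynomial Q_{mn}(z) = ₂F₁(-n, -a-m; -c-m-n+1; z) are real and simple and lie in the open interval (1, ∞). -/
/-- The denominator polynomial `Q_{mn}(z) = ₂F₁(-n, -a-m; -c-m-n+1; z)` of the
`[m/n]` Padé approximant for `₂F₁(a, 1; c; z)`. -/
noncomputable def padeDenom (m n : ℕ) (a c : ℝ) : Polynomial ℝ :=
  hypPoly n (-a - m) (-c - m - n + 1)

/-!
Put `A = a + m` and `B = c - a + n - 1`, so that the hypotheses say `A > n - 1` and `B > n - 1`.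
Up to a nonzero constant, the reversed polynomial `z ^ n * Q_{mn}(1 / z)` is the polynomial `P_n`
of the Rodrigues formula `d^n/dt^n [t ^ A * (1 - t) ^ B] = t ^ (A - n) * (1 - t) ^ (B - n) * P_n(t)`.
For `k < n` the function `t ^ (A - k) * (1 - t) ^ (B - k) * P_k(t)` vanishes at `0`, at `1` and at
the zeros of `P_k` in `(0, 1)`, so by Rolle's theorem `P_{k+1}` has one more zero in `(0, 1)` than
`P_k`. Hence `P_n` has `n` distinct zeros in `(0, 1)`, and their inverses are `n` distinct zeros of
`Q_{mn}` in `(1, ∞)`; as `deg Q_{mn} ≤ n`, these are all of its zeros.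
-/

open Polynomial Set
open scoped Finset

theorem Polynomial.roots_map_eq_of_natDegree_le_card {R S : Type*} [CommRing R] [IsDomain R]
    [CommRing S] [IsDomain S] {f : R →+* S} (hf : Function.Injective f) {p : R[X]} {s : Finset R}
    (hs : s.val ⊆ p.roots) (hdeg : p.natDegree ≤ #s) : (p.map f).roots = s.val.map f := by
  have hroots : p.roots = s.val := (Multiset.eq_of_le_of_card_le
    (Finset.val_le_iff_val_subset.2 hs) (p.card_roots'.trans hdeg)).symm
  have hcard : p.roots.card = p.natDegree := by
    rw [hroots]
    exact le_antisymm (card_le_degree_of_subset_roots hs) hdeg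
  rw [← roots_map_of_injective_of_card_eq_natDegree hf hcard, hroots]

theorem Polynomial.isRoot_reflect_inv {K : Type*} [Field K] {p : K[X]} {N : ℕ}
    (hp : p.natDegree ≤ N) {x : K} (hx : x ≠ 0) (hroot : p.IsRoot x) :
    (reflect N p).IsRoot x⁻¹ := by
  let := invertibleOfNonzero hx
  have h := eval₂_reflect_eq_zero_iff (RingHom.id K) x N p hp
  rw [invOf_eq_inv] at h
  exact h.2 hroot

theorem descPochhammer_eval_add (x : ℝ) (k d : ℕ) :
    (descPochhammer ℝ (k + d)).eval x
      = (descPochhammer ℝ k).eval x * (descPochhammer ℝ d).eval (x - k) := by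
  simp [← descPochhammer_mul, eval_comp]

theorem descPochhammer_succ_eval_left (x : ℝ) (k : ℕ) :
    (descPochhammer ℝ (k + 1)).eval x = x * (descPochhammer ℝ k).eval (x - 1) := by
  simp [descPochhammer_succ_left, eval_comp]

theorem poch_eq_neg_one_pow_mul (x : ℝ) (k : ℕ) :
    poch x k = (-1) ^ k * (descPochhammer ℝ k).eval (-x) := by
  have h (i : ℕ) : x + i = -(-x - i) := by ring
  simp_rw [poch, descPochhammer_eval_eq_prod_range, h, Finset.prod_neg, Finset.card_range]

theorem poch_neg_natCast_eq_zero {n k : ℕ} (h : n < k) : poch (-n) k = 0 :=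
  Finset.prod_eq_zero (Finset.mem_range.2 h) (by ring)

theorem coeff_hypPoly (n : ℕ) (b d : ℝ) (k : ℕ) :
    (hypPoly n b d).coeff k = poch (-n) k * poch b k / (poch d k * k.factorial) := by
  simp only [hypPoly, finsetSum_coeff, coeff_C_mul_X_pow]
  rw [Finset.sum_ite_eq (Finset.range (n + 1)) k]
  split_ifs with hk
  · rfl
  · rw [poch_neg_natCast_eq_zero (by simpa [Nat.lt_succ_iff] using hk), zero_mul, zero_div]

theorem natDegree_hypPoly_le (n : ℕ) (b d : ℝ) : (hypPoly n b d).natDegree ≤ n := by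
  rw [natDegree_le_iff_coeff_eq_zero]
  intro k hk
  rw [coeff_hypPoly, poch_neg_natCast_eq_zero (by exact_mod_cast hk), zero_mul, zero_div]

theorem card_le_card_add_one_of_hasDerivAt {f f' : ℝ → ℝ} {a b : ℝ} {s t : Finset ℝ}
    (hf : ContinuousOn f (Icc a b)) (hff' : ∀ x ∈ Ioo a b, HasDerivAt f (f' x) x)
    (hs : ∀ x ∈ s, x ∈ Icc a b ∧ f x = 0) (ht : ∀ x ∈ Ioo a b, f' x = 0 → x ∈ t) :
    #s ≤ #t + 1 := by
  refine Finset.card_le_of_interleaved fun x hx y hy hxy _ => ?_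
  obtain ⟨⟨hax, -⟩, hfx⟩ := hs x hx
  obtain ⟨⟨-, hyb⟩, hfy⟩ := hs y hy
  have hsub : Ioo x y ⊆ Ioo a b := Ioo_subset_Ioo hax hyb
  obtain ⟨z, hz, hz0⟩ := exists_hasDerivAt_eq_zero hxy (hf.mono (Icc_subset_Icc hax hyb))
    (hfx.trans hfy.symm) fun z hz => hff' z (hsub hz)
  exact ⟨z, ht z (hsub hz) hz0, hz⟩

noncomputable def rootsIoo (p : ℝ[X]) (a b : ℝ) : Finset ℝ :=
  {x ∈ p.roots.toFinset | x ∈ Ioo a b}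

theorem mem_rootsIoo {p : ℝ[X]} {a b x : ℝ} :
    x ∈ rootsIoo p a b ↔ p ≠ 0 ∧ p.IsRoot x ∧ x ∈ Ioo a b := by
  simp [rootsIoo, and_assoc]

section Rodrigues

variable (A B : ℝ)

/-- `t ^ (A - k) * (1 - t) ^ (B - k) * rodriguesPoly A B k` is the `k`-th derivative of
`t ^ A * (1 - t) ^ B`. -/
noncomputable def rodriguesPoly : ℕ → ℝ[X]
  | 0 => 1
  | k + 1 => C (A - k) * rodriguesPoly k - C (A + B - 2 * k) * (X * rodriguesPoly k)
      + X * (1 - X) * derivative (rodriguesPoly k)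

noncomputable def rodriguesFun (k : ℕ) (t : ℝ) : ℝ :=
  t ^ (A - k) * (1 - t) ^ (B - k) * (rodriguesPoly A B k).eval t

theorem hasDerivAt_rodriguesFun (k : ℕ) {t : ℝ} (ht : t ∈ Ioo 0 1) :
    HasDerivAt (rodriguesFun A B k) (rodriguesFun A B (k + 1) t) t := by
  obtain ⟨ht0, ht1⟩ := ht
  have h1t : 1 - t ≠ 0 := (sub_pos.2 ht1).ne'
  have hleft : HasDerivAt (fun t : ℝ => t ^ (A - k)) ((A - k) * t ^ (A - k - 1)) t :=
    Real.hasDerivAt_rpow_const (Or.inl ht0.ne')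
  have hright : HasDerivAt (fun t : ℝ => (1 - t) ^ (B - k))
      (-1 * (B - k) * (1 - t) ^ (B - k - 1)) t := by
    simpa using ((hasDerivAt_id t).const_sub 1).rpow_const (p := B - k) (Or.inl h1t)
  refine ((hleft.mul hright).mul ((rodriguesPoly A B k).hasDerivAt t)).congr_deriv ?_
  simp only [rodriguesFun, rodriguesPoly, Nat.cast_add_one, ← sub_sub, Real.rpow_sub_one ht0.ne',
    Real.rpow_sub_one h1t, eval_add, eval_sub, eval_mul, eval_C, eval_X, eval_one, Pi.mul_apply]
  field_simp
  ring

theorem continuous_rodriguesFun {k : ℕ} (hA : (k : ℝ) ≤ A) (hB : (k : ℝ) ≤ B) :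
    Continuous (rodriguesFun A B k) :=
  ((Real.continuous_rpow_const (sub_nonneg.2 hA)).mul
    ((Real.continuous_rpow_const (sub_nonneg.2 hB)).comp (continuous_const.sub continuous_id))).mul
    (rodriguesPoly A B k).continuous

theorem rodriguesFun_zero {k : ℕ} (hA : (k : ℝ) < A) : rodriguesFun A B k 0 = 0 := by
  simp [rodriguesFun, Real.zero_rpow (sub_pos.2 hA).ne']

theorem rodriguesFun_one {k : ℕ} (hB : (k : ℝ) < B) : rodriguesFun A B k 1 = 0 := by
  simp [rodriguesFun, Real.zero_rpow (sub_pos.2 hB).ne']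

theorem isRoot_rodriguesPoly_of_rodriguesFun_eq_zero {k : ℕ} {t : ℝ} (ht : t ∈ Ioo 0 1)
    (h : rodriguesFun A B k t = 0) : (rodriguesPoly A B k).IsRoot t := by
  have hleft := Real.rpow_pos_of_pos ht.1 (A - k)
  have hright := Real.rpow_pos_of_pos (sub_pos.2 ht.2) (B - k)
  simpa [rodriguesFun, hleft.ne', hright.ne'] using h

theorem coeff_rodriguesPoly_succ_zero (k : ℕ) :
    (rodriguesPoly A B (k + 1)).coeff 0 = (A - k) * (rodriguesPoly A B k).coeff 0 := by
  simp [rodriguesPoly]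

theorem coeff_rodriguesPoly_succ_succ (k j : ℕ) :
    (rodriguesPoly A B (k + 1)).coeff (j + 1)
      = (A - k + j + 1) * (rodriguesPoly A B k).coeff (j + 1)
        - (A + B - 2 * k + j) * (rodriguesPoly A B k).coeff j := by
  set p := rodriguesPoly A B k
  rw [rodriguesPoly, show X * (1 - X) * derivative p = X * derivative p - X * (X * derivative p)
    by ring]
  rcases j with _ | j
  · simp only [coeff_add, coeff_sub, coeff_C_mul, coeff_X_mul, coeff_X_mul_zero, coeff_derivative]
    push_cast
    ring
  · simp only [coeff_add, coeff_sub, coeff_C_mul, coeff_X_mul, coeff_derivative]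
    push_cast
    ring

theorem coeff_zero_rodriguesPoly (k : ℕ) :
    (rodriguesPoly A B k).coeff 0 = (descPochhammer ℝ k).eval A := by
  induction k with
  | zero => simp [rodriguesPoly]
  | succ k ih => rw [coeff_rodriguesPoly_succ_zero, ih, descPochhammer_succ_eval, mul_comm]

theorem rodriguesPoly_ne_zero {k : ℕ} (hA : (k : ℝ) - 1 < A) : rodriguesPoly A B k ≠ 0 := by
  intro h
  have := coeff_zero_rodriguesPoly A B k
  rw [h, coeff_zero] at this
  exact (descPochhammer_pos hA).ne this

-- For `i > k` the truncated `k - i` is harmless, as `k.choose i = 0`.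
noncomputable def rodriguesCoeff (k i : ℕ) : ℝ :=
  (-1) ^ i * k.choose i * (descPochhammer ℝ (k - i)).eval A
    * (descPochhammer ℝ i).eval (A + B - k + i)

theorem rodriguesCoeff_of_lt {k i : ℕ} (h : k < i) : rodriguesCoeff A B k i = 0 := by
  simp [rodriguesCoeff, Nat.choose_eq_zero_of_lt h]

theorem rodriguesCoeff_succ_succ (k j : ℕ) :
    rodriguesCoeff A B (k + 1) (j + 1)
      = (A - k + j + 1) * rodriguesCoeff A B k (j + 1)
        - (A + B - 2 * k + j) * rodriguesCoeff A B k j := by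
  rcases lt_trichotomy j k with hjk | rfl | hjk
  · obtain ⟨d, rfl⟩ := Nat.exists_eq_add_of_lt hjk
    have hchoose : ((j + d + 1).choose (j + 1) : ℝ) * (j + 1) = (j + d + 1).choose j * (d + 1) := by
      have := Nat.choose_succ_right_eq (j + d + 1) j
      rw [show j + d + 1 - j = d + 1 by omega] at this
      exact_mod_cast this
    set E := A + B - d - 1
    simp only [rodriguesCoeff, show j + d + 1 + 1 - (j + 1) = d + 1 by omega,
      show j + d + 1 - (j + 1) = d by omega, show j + d + 1 - j = d + 1 by omega,
      show A + B - ((j + d + 1 + 1 : ℕ) : ℝ) + ((j + 1 : ℕ) : ℝ) = E by push_cast; ring,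
      show A + B - ((j + d + 1 : ℕ) : ℝ) + ((j + 1 : ℕ) : ℝ) = E + 1 by push_cast; ring,
      show A + B - ((j + d + 1 : ℕ) : ℝ) + (j : ℝ) = E by push_cast; ring,
      Nat.choose_succ_succ' (j + d + 1) j]
    rw [descPochhammer_succ_eval_left (E + 1) j, add_sub_cancel_right, descPochhammer_succ_eval j E,
      descPochhammer_succ_eval d A]
    push_cast
    linear_combination (-1) ^ j * (descPochhammer ℝ d).eval A * (descPochhammer ℝ j).eval E
      * (A - d) * hchoose
  · simp [rodriguesCoeff, descPochhammer_succ_eval]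
    ring
  · simp [rodriguesCoeff_of_lt, hjk, hjk.trans (Nat.lt_succ_self _)]

theorem coeff_rodriguesPoly (k i : ℕ) :
    (rodriguesPoly A B k).coeff i = rodriguesCoeff A B k i := by
  induction k generalizing i with
  | zero => rcases i with _ | i <;> simp [rodriguesPoly, rodriguesCoeff, coeff_one]
  | succ k ih =>
    rcases i with _ | i
    · simp [coeff_rodriguesPoly_succ_zero, coeff_zero_rodriguesPoly, rodriguesCoeff,
        descPochhammer_succ_eval, mul_comm]
    · rw [coeff_rodriguesPoly_succ_succ, ih, ih, rodriguesCoeff_succ_succ]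

theorem natDegree_rodriguesPoly_le (k : ℕ) : (rodriguesPoly A B k).natDegree ≤ k := by
  rw [natDegree_le_iff_coeff_eq_zero]
  intro i hi
  rw [coeff_rodriguesPoly, rodriguesCoeff_of_lt A B (by exact_mod_cast hi)]

theorem card_rootsIoo_rodriguesPoly_succ {k : ℕ} (hA : (k : ℝ) < A) (hB : (k : ℝ) < B) :
    #(rootsIoo (rodriguesPoly A B k) 0 1) + 1 ≤ #(rootsIoo (rodriguesPoly A B (k + 1)) 0 1) := by
  set s := rootsIoo (rodriguesPoly A B k) 0 1
  have h0 : (0 : ℝ) ∉ insert 1 s := by simp [s, mem_rootsIoo]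
  have h1 : (1 : ℝ) ∉ s := by simp [s, mem_rootsIoo]
  have hP : rodriguesPoly A B (k + 1) ≠ 0 := rodriguesPoly_ne_zero A B (by push_cast; linarith)
  have hzeros : ∀ x ∈ insert 0 (insert 1 s), x ∈ Icc 0 1 ∧ rodriguesFun A B k x = 0 := by
    intro x hx
    rcases Finset.mem_insert.1 hx with rfl | hx
    · exact ⟨left_mem_Icc.2 zero_le_one, rodriguesFun_zero A B hA⟩
    rcases Finset.mem_insert.1 hx with rfl | hx
    · exact ⟨right_mem_Icc.2 zero_le_one, rodriguesFun_one A B hB⟩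
    obtain ⟨-, hroot, hx⟩ := mem_rootsIoo.1 hx
    exact ⟨Ioo_subset_Icc_self hx, by simp [rodriguesFun, hroot.eq_zero]⟩
  have := card_le_card_add_one_of_hasDerivAt (continuous_rodriguesFun A B hA.le hB.le).continuousOn
    (fun x hx => hasDerivAt_rodriguesFun A B k hx) hzeros
    (fun x hx hfx => mem_rootsIoo.2
      ⟨hP, isRoot_rodriguesPoly_of_rodriguesFun_eq_zero A B hx hfx, hx⟩)
  rw [Finset.card_insert_of_notMem h0, Finset.card_insert_of_notMem h1] at this
  omega

theorem le_card_rootsIoo_rodriguesPoly {n : ℕ} (hA : (n : ℝ) - 1 < A) (hB : (n : ℝ) - 1 < B) :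
    n ≤ #(rootsIoo (rodriguesPoly A B n) 0 1) := by
  induction n with
  | zero => exact Nat.zero_le _
  | succ k ih =>
    push_cast at hA hB
    have hstep := card_rootsIoo_rodriguesPoly_succ A B (k := k) (by linarith) (by linarith)
    have := ih (by linarith) (by linarith)
    omega

end Rodrigues

theorem poch_mul_poch_div_eq_rodriguesCoeff {A B : ℝ} {k n : ℕ} (hk : k ≤ n)
    (h : (descPochhammer ℝ n).eval (A + B) ≠ 0) :
    poch (-n) k * poch (-A) k / (poch (-(A + B)) k * k.factorial)
      = (-1) ^ n / (descPochhammer ℝ n).eval (A + B) * rodriguesCoeff A B n (n - k) := by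
  obtain ⟨d, rfl⟩ := Nat.exists_eq_add_of_le hk
  rw [descPochhammer_eval_add] at h ⊢
  have hk0 := left_ne_zero_of_mul h
  have hd0 := right_ne_zero_of_mul h
  have hsign : (-1 : ℝ) ^ (d * 2) = 1 := Even.neg_one_pow ⟨d, by ring⟩
  simp only [poch_eq_neg_one_pow_mul, neg_neg, rodriguesCoeff, Nat.add_sub_cancel_left,
    Nat.add_sub_cancel, descPochhammer_eval_eq_descFactorial,
    Nat.descFactorial_eq_factorial_mul_choose,
    show A + B - ((k + d : ℕ) : ℝ) + d = A + B - k by push_cast; ring]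
  field_simp
  rw [Nat.choose_symm_add]
  push_cast
  linear_combination -((-1) ^ k * (k.factorial : ℝ) * (k + d).choose d
    * (descPochhammer ℝ k).eval A) * hsign

theorem hypPoly_eq_C_mul_reflect_rodriguesPoly (A B : ℝ) (n : ℕ)
    (h : (descPochhammer ℝ n).eval (A + B) ≠ 0) :
    hypPoly n (-A) (-(A + B))
      = C ((-1) ^ n / (descPochhammer ℝ n).eval (A + B)) * reflect n (rodriguesPoly A B n) := by
  ext k
  rw [coeff_hypPoly, coeff_C_mul, coeff_reflect, coeff_rodriguesPoly]
  rcases le_or_gt k n with hk | hk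
  · rw [revAt_le hk, poch_mul_poch_div_eq_rodriguesCoeff hk h]
  · rw [poch_neg_natCast_eq_zero hk, show revAt n k = k from if_neg hk.not_ge,
      rodriguesCoeff_of_lt A B hk]
    simp

theorem exists_roots_hypPoly_gt_one {A B : ℝ} {n : ℕ} (hA : (n : ℝ) - 1 < A)
    (hB : (n : ℝ) - 1 < B) :
    ∃ S : Finset ℝ, n ≤ #S ∧ (∀ x ∈ S, x ∈ Ioi 1) ∧ S.val ⊆ (hypPoly n (-A) (-(A + B))).roots := by
  have hAB : 0 < (descPochhammer ℝ n).eval (A + B) := by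
    rw [descPochhammer_eval_eq_prod_range]
    refine Finset.prod_pos fun i hi => ?_
    have : (i : ℝ) + 1 ≤ n := by exact_mod_cast Finset.mem_range.1 hi
    linarith
  have hQ := hypPoly_eq_C_mul_reflect_rodriguesPoly A B n hAB.ne'
  have hQ0 : hypPoly n (-A) (-(A + B)) ≠ 0 := by
    rw [hQ]
    exact mul_ne_zero (C_ne_zero.2 (div_ne_zero (pow_ne_zero _ (by norm_num)) hAB.ne'))
      (reflect_eq_zero_iff.not.2 (rodriguesPoly_ne_zero A B hA))
  refine ⟨(rootsIoo (rodriguesPoly A B n) 0 1).image (·⁻¹), ?_, ?_, ?_⟩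
  · rw [Finset.card_image_of_injective _ inv_injective]
    exact le_card_rootsIoo_rodriguesPoly A B hA hB
  · simp only [Finset.mem_image, mem_rootsIoo]
    rintro _ ⟨x, ⟨-, -, hx0, hx1⟩, rfl⟩
    exact one_lt_inv₀ hx0 |>.2 hx1
  · intro y hy
    obtain ⟨x, hx, rfl⟩ := Finset.mem_image.1 hy
    obtain ⟨-, hroot, hx0, -⟩ := mem_rootsIoo.1 hx
    rw [mem_roots hQ0, hQ, IsRoot, eval_C_mul,
      isRoot_reflect_inv (natDegree_rodriguesPoly_le A B n) hx0.ne' hroot, mul_zero]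

theorem pade_poles_7_general (a c : ℝ) (m n : ℕ) (hca : c > a) (ha : a > (n : ℝ) - m - 1) :
    ∃ S : Finset ℝ, S.card = n ∧ (∀ x ∈ S, x ∈ Set.Ioi (1 : ℝ)) ∧
      ((padeDenom m n a c).map (algebraMap ℝ ℂ)).roots = S.val.map (fun x => (x : ℂ)) := by
  obtain ⟨S, hnS, hS1, hSroots⟩ :=
    exists_roots_hypPoly_gt_one (A := a + m) (B := c - a + n - 1) (n := n) (by linarith) (by linarith)
  rw [show hypPoly n (-(a + m)) (-(a + m + (c - a + n - 1))) = padeDenom m n a c by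
    rw [padeDenom]; congr 1 <;> ring] at hSroots
  have hdeg : (padeDenom m n a c).natDegree ≤ n := natDegree_hypPoly_le _ _ _
  refine ⟨S, le_antisymm ((card_le_degree_of_subset_roots hSroots).trans hdeg) hnS, hS1, ?_⟩
  rw [roots_map_eq_of_natDegree_le_card (algebraMap ℝ ℂ).injective hSroots (hdeg.trans hnS)]
  simp [Complex.coe_algebraMap]

/-- If `c > a > n - m - 1`, all `n` zeros of `Q_{mn}` are real, simple and lie in
`(1, ∞)`. -/
theorem pade_poles_7 (a c : ℝ) (hc : ∀ k : ℕ, c ≠ -(k : ℝ))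
    (m n : ℕ) (hm : 0 < m) (hn : 0 < n) (hmn : n - 1 ≤ m)
    (hca : c > a) (ha : a > (n : ℝ) - m - 1) :
    ∃ S : Finset ℝ, S.card = n ∧ (∀ x ∈ S, x ∈ Set.Ioi (1 : ℝ)) ∧
      ((padeDenom m n a c).map (algebraMap ℝ ℂ)).roots = S.val.map (fun x => (x : ℂ)) :=
  pade_poles_7_general a c m n hca ha
end
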